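/- Bruggeman transform, converse direction. Let ν ∈ ℂ with ν ∉ ½+ℤ, and let ψ : ℂ∖(-∞,0] → V be holomorphic and satisfy the Lewis equation η(T)ψ(z) = ψ(z+1) + (z+1)^{-2ν-1} η(ST⁻¹) ψ(z/(z+1)) for all z ∈ ℂ∖(-∞,0]. Define f : ℂ∖ℝ → V by f(z) := (1+e^{-2πiν})^{-1}(ψ(z) + z^{-2ν-1} η(S) ψ(-1/z)) for Im z > 0 and f(z) := (1+e^{2πiν})^{-1}(ψ(z) + z^{-2ν-1} η(S) ψ(-1/z)) for Im z < 0 (principal-branch powers). Then f is holomorphic and satisfies f(z+1) = η(T) f(z) for all z ∈ ℂ∖ℝ. If moreover ψ satisfies the limit condition that L± := lim_{Im z→±∞} (ψ(z) + z^{-2ν-1} η(S) ψ(-1/z)) exist and e^{πiν}L₊ + e^{-πiν}L₋ = 0, then f ∈ F_η. -/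

import Mathlib

open Complex Filter Topology MeasureTheory Set

noncomputable section

abbrev SL2Z := Matrix.SpecialLinearGroup (Fin 2) ℤ

def Smat : SL2Z := ⟨!![0, 1; -1, 0], by decide⟩
def Tmat : SL2Z := ⟨!![1, 1; 0, 1], by decide⟩
def negI : SL2Z := ⟨!![-1, 0; 0, -1], by decide⟩

variable {V : Type} [NormedAddCommGroup V] [NormedSpace ℂ V]

/-- The space `F_η`. -/
structure MemFeta (η : SL2Z →* (V →ₗ[ℂ] V)ˣ) (f : ℂ → V) : Prop where
  holo : DifferentiableOn ℂ f {z : ℂ | z.im ≠ 0}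
  periodic : ∀ z : ℂ, z.im ≠ 0 → f (z + 1) = (η Tmat : V →ₗ[ℂ] V) (f z)
  bounded : ∃ C : ℝ, ∀ z : ℂ, 1 ≤ |z.im| → ‖f z‖ ≤ C
  limits : ∃ a b : V, Tendsto (fun t : ℝ => f ((t : ℂ) * I)) atTop (𝓝 a) ∧
    Tendsto (fun t : ℝ => f (-((t : ℂ) * I))) atTop (𝓝 b) ∧ a + b = 0

/-- `ψ(z) + z^{-2ν-1} η(S) ψ(-1/z)`. -/
def lewisCombo (ν : ℂ) (η : SL2Z →* (V →ₗ[ℂ] V)ˣ) (ψ : ℂ → V) : ℂ → V :=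
  fun z => ψ z + (z ^ (-2 * ν - 1)) • (η Smat : V →ₗ[ℂ] V) (ψ (-z⁻¹))

/-!
The Lewis equation, used at `z` and at `-1/(z+1)`, together with `(ST⁻¹)² = TS` and the identity
`(z+1)^s (z/(z+1))^s = z^s` (valid off `ℝ`, where `z` and `z+1` lie in the same half-plane), shows
that `g(z) = ψ(z) + z^{-2ν-1} η(S) ψ(-1/z)` satisfies `g(z+1) = η(T) g(z)`. On each half-plane `f`
is a constant multiple of `g`, hence holomorphic and `η(T)`-periodic. Since `η` has finite image,
periodicity reduces boundedness on `|Im z| ≥ 1` to a strip of width one, where it follows from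
compactness and the limits at `±i∞`. Finally `(1 + e^{-2x})⁻¹ = e^{2x} (1 + e^{2x})⁻¹` turns the
limit condition `e^{πiν} L₊ + e^{-πiν} L₋ = 0` into `f(i∞) + f(-i∞) = 0`.
-/

namespace Complex

theorem mem_slitPlane_of_im_ne_zero {z : ℂ} (hz : z.im ≠ 0) : z ∈ slitPlane :=
  mem_slitPlane_iff.2 (Or.inr hz)

theorem neg_inv_mem_slitPlane {z : ℂ} (hz : z.im ≠ 0) : -z⁻¹ ∈ slitPlane := by
  refine mem_slitPlane_of_im_ne_zero ?_
  have hz0 : z ≠ 0 := fun h => hz (by simp [h])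
  simpa [neg_div] using div_ne_zero hz (normSq_pos.2 hz0).ne'

theorem log_div_of_im_mul_pos {x y : ℂ} (h : 0 < x.im * y.im) :
    log (x / y) = log x - log y := by
  have hx : x ≠ 0 := fun hx => by simp [hx] at h
  have hy : y ≠ 0 := fun hy => by simp [hy] at h
  have hy_pi : y.arg ≠ Real.pi := fun hπ => by simp [(arg_eq_pi_iff.1 hπ).2] at h
  have hx_lt := arg_lt_pi_iff.2 (Or.inr (left_ne_zero_of_mul h.ne'))
  have hy_lt := arg_lt_pi_iff.2 (Or.inr (right_ne_zero_of_mul h.ne'))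
  have hx_gt := neg_pi_lt_arg x
  have hy_gt := neg_pi_lt_arg y
  -- `arg x` and `arg y` lie both in `[0, π)` or both in `(-π, 0)`.
  have hsub : arg x + arg y⁻¹ ∈ Ioc (-Real.pi) Real.pi := by
    rw [arg_inv, if_neg hy_pi]
    rcases mul_pos_iff.1 h with ⟨hx', hy'⟩ | ⟨hx', hy'⟩
    · have := arg_nonneg_iff.2 hx'.le
      have := arg_nonneg_iff.2 hy'.le
      constructor <;> linarith
    · have := arg_neg_iff.2 hx'
      have := arg_neg_iff.2 hy'
      constructor <;> linarith
  rw [div_eq_mul_inv, log_mul hx (inv_ne_zero hy) hsub, log_inv y hy_pi, sub_eq_add_neg]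

theorem div_cpow_of_im_mul_pos {x y : ℂ} (h : 0 < x.im * y.im) (s : ℂ) :
    (x / y) ^ s = x ^ s / y ^ s := by
  have hx : x ≠ 0 := fun hx => by simp [hx] at h
  have hy : y ≠ 0 := fun hy => by simp [hy] at h
  rw [cpow_def_of_ne_zero (div_ne_zero hx hy), cpow_def_of_ne_zero hx, cpow_def_of_ne_zero hy,
    log_div_of_im_mul_pos h, sub_mul, exp_sub]

theorem one_add_exp_neg_inv (x : ℂ) : (1 + exp (-x))⁻¹ = exp x * (1 + exp x)⁻¹ := by
  have : 1 + exp (-x) = (exp x)⁻¹ * (1 + exp x) := by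
    rw [exp_neg, mul_add, mul_one, inv_mul_cancel₀ (exp_ne_zero x), add_comm]
  rw [this, mul_inv, inv_inv]

end Complex

theorem Smat_mul_Tmat_inv_sq : (Smat * Tmat⁻¹) ^ 2 = Tmat * Smat := by decide

section Lewis

variable {ν : ℂ} {η : SL2Z →* (V →ₗ[ℂ] V)ˣ} {ψ : ℂ → V}

theorem lewisCombo_add_one
    (hψ : ∀ z ∈ slitPlane, (η Tmat : V →ₗ[ℂ] V) (ψ z) = ψ (z + 1) +
      ((z + 1) ^ (-2 * ν - 1)) • (η (Smat * Tmat⁻¹) : V →ₗ[ℂ] V) (ψ (z / (z + 1))))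
    {z : ℂ} (hz : z.im ≠ 0) :
    lewisCombo ν η ψ (z + 1) = (η Tmat : V →ₗ[ℂ] V) (lewisCombo ν η ψ z) := by
  have hz0 : z ≠ 0 := fun h => hz (by simp [h])
  have hz1 : z + 1 ≠ 0 := fun h => hz (by simpa using congrArg im h)
  have hw : -(z + 1)⁻¹ ∈ slitPlane := neg_inv_mem_slitPlane (by simpa using hz)
  -- The Lewis equation at `w = -1/(z+1)`, where `w + 1 = z/(z+1)` and `w/(w+1) = -1/z`.
  have hlewis_w := hψ _ hw
  rw [show -(z + 1)⁻¹ + 1 = z / (z + 1) by field_simp; ring,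
    show -(z + 1)⁻¹ / (z / (z + 1)) = -z⁻¹ by field_simp] at hlewis_w
  have hψw : ψ (-(z + 1)⁻¹) = (η Tmat⁻¹ : V →ₗ[ℂ] V) (ψ (z / (z + 1)) +
      (z / (z + 1)) ^ (-2 * ν - 1) • (η (Smat * Tmat⁻¹) : V →ₗ[ℂ] V) (ψ (-z⁻¹))) := by
    rw [← hlewis_w, ← Module.End.mul_apply, ← Units.val_mul, ← map_mul, inv_mul_cancel, map_one,
      Units.val_one, Module.End.one_apply]
  have hpow : (z + 1) ^ (-2 * ν - 1) * (z / (z + 1)) ^ (-2 * ν - 1) = z ^ (-2 * ν - 1) := by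
    rw [div_cpow_of_im_mul_pos (by simpa using mul_self_pos.2 hz),
      mul_div_cancel₀ _ (cpow_ne_zero_iff.2 (Or.inl hz1))]
  simp only [lewisCombo, hψw, hψ z (mem_slitPlane_of_im_ne_zero hz), map_add, map_smul,
    ← Module.End.mul_apply, ← Units.val_mul, ← map_mul, smul_add, smul_smul, hpow]
  rw [← mul_assoc, ← sq, Smat_mul_Tmat_inv_sq, add_assoc]

theorem differentiableOn_lewisCombo [FiniteDimensional ℂ V]
    (hψ : DifferentiableOn ℂ ψ slitPlane) :
    DifferentiableOn ℂ (lewisCombo ν η ψ) {z | z.im ≠ 0} := by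
  intro z hz
  have hz0 : z ≠ 0 := fun h => hz (by simp [h])
  have hψz : DifferentiableAt ℂ ψ z :=
    hψ.differentiableAt (isOpen_slitPlane.mem_nhds (mem_slitPlane_of_im_ne_zero hz))
  have hψinv : DifferentiableAt ℂ (fun w => ψ (-w⁻¹)) z :=
    (hψ.differentiableAt (isOpen_slitPlane.mem_nhds (neg_inv_mem_slitPlane hz))).comp z
      (differentiableAt_inv hz0).neg
  have hS :=
    (LinearMap.toContinuousLinearMap (η Smat : V →ₗ[ℂ] V)).differentiableAt.comp z hψinv
  exact (hψz.add ((differentiableAt_id.cpow (differentiableAt_const _)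
    (mem_slitPlane_of_im_ne_zero hz)).smul hS)).differentiableWithinAt

end Lewis

section HalfPlanes

variable {f g : ℂ → V} {a b : ℂ}

theorem differentiableOn_of_eq_smul_of_eq_smul (hg : DifferentiableOn ℂ g {z | z.im ≠ 0})
    (hup : ∀ z, 0 < z.im → f z = a • g z) (hdown : ∀ z, z.im < 0 → f z = b • g z) :
    DifferentiableOn ℂ f {z | z.im ≠ 0} := by
  intro z hz
  have hgz : DifferentiableAt ℂ g z :=
    hg.differentiableAt ((isOpen_ne_fun continuous_im continuous_const).mem_nhds hz)
  refine DifferentiableAt.differentiableWithinAt ?_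
  rcases (show z.im ≠ 0 from hz).lt_or_gt with hneg | hpos
  · exact (hgz.const_smul b).congr_of_eventuallyEq
      (eventually_of_mem ((isOpen_lt continuous_im continuous_const).mem_nhds hneg) hdown)
  · exact (hgz.const_smul a).congr_of_eventuallyEq
      (eventually_of_mem ((isOpen_lt continuous_const continuous_im).mem_nhds hpos) hup)

theorem apply_add_one_of_eq_smul_of_eq_smul {A : V →ₗ[ℂ] V}
    (hg : ∀ z, z.im ≠ 0 → g (z + 1) = A (g z))
    (hup : ∀ z, 0 < z.im → f z = a • g z) (hdown : ∀ z, z.im < 0 → f z = b • g z)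
    {z : ℂ} (hz : z.im ≠ 0) : f (z + 1) = A (f z) := by
  have him : (z + 1).im = z.im := by simp
  rcases hz.lt_or_gt with hneg | hpos
  · rw [hdown z hneg, hdown _ (him ▸ hneg), hg z hz, map_smul]
  · rw [hup z hpos, hup _ (him ▸ hpos), hg z hz, map_smul]

theorem tendsto_comap_im_atTop_of_eq_smul {L : V} (hg : Tendsto g (comap im atTop) (𝓝 L))
    (hup : ∀ z, 0 < z.im → f z = a • g z) : Tendsto f (comap im atTop) (𝓝 (a • L)) :=
  (hg.const_smul a).congr' <| eventually_of_mem (preimage_mem_comap (Ioi_mem_atTop 0))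
    fun z hz => (hup z hz).symm

theorem tendsto_comap_im_atBot_of_eq_smul {L : V} (hg : Tendsto g (comap im atBot) (𝓝 L))
    (hdown : ∀ z, z.im < 0 → f z = b • g z) : Tendsto f (comap im atBot) (𝓝 (b • L)) :=
  (hg.const_smul b).congr' <| eventually_of_mem (preimage_mem_comap (Iio_mem_atBot 0))
    fun z hz => (hdown z hz).symm

end HalfPlanes

theorem tendsto_ofReal_mul_I_comap_im_atTop :
    Tendsto (fun t : ℝ => (t : ℂ) * I) atTop (comap im atTop) :=
  tendsto_comap_iff.2 <| tendsto_id.congr fun t => by simp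

theorem tendsto_neg_ofReal_mul_I_comap_im_atBot :
    Tendsto (fun t : ℝ => -((t : ℂ) * I)) atTop (comap im atBot) :=
  tendsto_comap_iff.2 <| tendsto_neg_atTop_atBot.congr fun t => by simp

section Bounds

open ComplexConjugate

variable {E : Type*} [SeminormedAddCommGroup E] {f : ℂ → E}

theorem exists_norm_le_of_isBoundedUnder_comap_im_atTop {a b c : ℝ}
    (hf : ContinuousOn f {z | c ≤ z.im})
    (hbdd : IsBoundedUnder (· ≤ ·) (comap im atTop) fun z => ‖f z‖) :
    ∃ C, ∀ z : ℂ, z.re ∈ Icc a b → c ≤ z.im → ‖f z‖ ≤ C := by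
  obtain ⟨B, hB⟩ := hbdd
  obtain ⟨M, hM⟩ := eventually_atTop.1 (eventually_comap.1 (eventually_map.1 hB))
  obtain ⟨C, hC⟩ := (isCompact_Icc.reProdIm isCompact_Icc : IsCompact (Icc a b ×ℂ Icc c M))
    |>.exists_bound_of_continuousOn (hf.mono fun z hz => (mem_reProdIm.1 hz).2.1)
  refine ⟨max C B, fun z hre hc => ?_⟩
  rcases le_total z.im M with h | h
  · exact (hC z (mem_reProdIm.2 ⟨hre, hc, h⟩)).trans (le_max_left _ _)
  · exact (hM _ h z rfl).trans (le_max_right _ _)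

theorem exists_norm_le_of_isBoundedUnder_comap_im_atBot {a b c : ℝ}
    (hf : ContinuousOn f {z | z.im ≤ c})
    (hbdd : IsBoundedUnder (· ≤ ·) (comap im atBot) fun z => ‖f z‖) :
    ∃ C, ∀ z : ℂ, z.re ∈ Icc a b → z.im ≤ c → ‖f z‖ ≤ C := by
  have hconj : Tendsto conj (comap im atTop) (comap im atBot) :=
    tendsto_comap_iff.2 <| (tendsto_neg_atTop_atBot.comp tendsto_comap).congr fun z => by simp
  obtain ⟨C, hC⟩ := exists_norm_le_of_isBoundedUnder_comap_im_atTop (f := fun z => f (conj z))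
    (a := a) (b := b) (c := -c)
    (hf.comp continuous_conj.continuousOn fun z hz => by simp at hz ⊢; linarith)
    (hconj.isBoundedUnder_comp hbdd)
  exact ⟨C, fun z hre hc => by simpa using hC (conj z) (by simpa using hre) (by simpa using hc)⟩

end Bounds

section Periodic

variable {f : ℂ → V}

theorem apply_add_intCast_of_apply_add_one {u : (V →ₗ[ℂ] V)ˣ}
    (hf : ∀ z, z.im ≠ 0 → f (z + 1) = (u : V →ₗ[ℂ] V) (f z)) (n : ℤ) {z : ℂ} (hz : z.im ≠ 0) :
    f (z + n) = ((u ^ n : (V →ₗ[ℂ] V)ˣ) : V →ₗ[ℂ] V) (f z) := by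
  induction n using Int.induction_on with
  | zero => simp
  | succ k ih =>
    rw [Int.cast_add, Int.cast_one, ← add_assoc, hf _ (by simpa using hz), ih, add_comm,
      zpow_one_add, Units.val_mul, Module.End.mul_apply]
  | pred k ih =>
    have h := hf (z + ↑(-(k : ℤ) - 1)) (by simpa using hz)
    rw [show z + ↑(-(k : ℤ) - 1) + 1 = z + ↑(-(k : ℤ)) by push_cast; ring, ih] at h
    conv_rhs => rw [sub_eq_neg_add, zpow_add, zpow_neg_one, Units.val_mul, Module.End.mul_apply,
      h, ← Module.End.mul_apply, ← Units.val_mul, inv_mul_cancel, Units.val_one,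
      Module.End.one_apply]

theorem exists_norm_apply_le_of_finite [FiniteDimensional ℂ V] {s : Set (V →ₗ[ℂ] V)}
    (hs : s.Finite) : ∃ C, 0 ≤ C ∧ ∀ A ∈ s, ∀ v, ‖A v‖ ≤ C * ‖v‖ := by
  obtain ⟨C, hC⟩ := (hs.image fun A => ‖LinearMap.toContinuousLinearMap A‖).bddAbove
  refine ⟨max C 0, le_max_right _ _, fun A hA v => ?_⟩
  calc ‖A v‖ = ‖LinearMap.toContinuousLinearMap A v‖ := rfl
    _ ≤ ‖LinearMap.toContinuousLinearMap A‖ * ‖v‖ := ContinuousLinearMap.le_opNorm _ _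
    _ ≤ max C 0 * ‖v‖ := by gcongr; exact (hC ⟨A, hA, rfl⟩).trans (le_max_left _ _)

theorem exists_norm_le_of_apply_add_one {u : (V →ₗ[ℂ] V)ˣ} {C : ℝ} (hC : 0 ≤ C)
    (hu : ∀ (n : ℤ) (v : V), ‖((u ^ n : (V →ₗ[ℂ] V)ˣ) : V →ₗ[ℂ] V) v‖ ≤ C * ‖v‖)
    (hf : ContinuousOn f {z | z.im ≠ 0})
    (hper : ∀ z, z.im ≠ 0 → f (z + 1) = (u : V →ₗ[ℂ] V) (f z))
    (htop : IsBoundedUnder (· ≤ ·) (comap im atTop) fun z => ‖f z‖)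
    (hbot : IsBoundedUnder (· ≤ ·) (comap im atBot) fun z => ‖f z‖) :
    ∃ D, ∀ z : ℂ, 1 ≤ |z.im| → ‖f z‖ ≤ D := by
  obtain ⟨D₁, hD₁⟩ := exists_norm_le_of_isBoundedUnder_comap_im_atTop
    (a := 0) (b := 1) (c := 1)
    (hf.mono fun z (hz : 1 ≤ z.im) => (show (0 : ℝ) < z.im by linarith).ne') htop
  obtain ⟨D₂, hD₂⟩ := exists_norm_le_of_isBoundedUnder_comap_im_atBot
    (a := 0) (b := 1) (c := -1)
    (hf.mono fun z (hz : z.im ≤ -1) => (show z.im < 0 by linarith).ne) hbot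
  refine ⟨C * max D₁ D₂, fun z hz => ?_⟩
  have hz0 : z.im ≠ 0 := abs_pos.1 (one_pos.trans_le hz)
  set w := z - ⌊z.re⌋
  have hw_im : w.im = z.im := by simp [w]
  have hw_re : w.re ∈ Icc (0 : ℝ) 1 := by
    simp only [w, sub_re, intCast_re, mem_Icc, sub_nonneg, Int.floor_le, true_and]
    linarith [Int.lt_floor_add_one z.re]
  have hfw : ‖f w‖ ≤ max D₁ D₂ := by
    rcases le_abs'.1 hz with h | h
    · exact (hD₂ w hw_re (hw_im ▸ h)).trans (le_max_right _ _)
    · exact (hD₁ w hw_re (hw_im ▸ h)).trans (le_max_left _ _)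
  calc ‖f z‖ = ‖((u ^ ⌊z.re⌋ : (V →ₗ[ℂ] V)ˣ) : V →ₗ[ℂ] V) (f w)‖ := by
        rw [← apply_add_intCast_of_apply_add_one hper _ (hw_im ▸ hz0), sub_add_cancel]
    _ ≤ C * ‖f w‖ := hu _ _
    _ ≤ C * max D₁ D₂ := by gcongr

end Periodic

theorem inv_one_add_exp_smul_add_eq_zero {x : ℂ} {p m : V}
    (h : exp x • p + exp (-x) • m = 0) :
    (1 + exp (-(2 * x)))⁻¹ • p + (1 + exp (2 * x))⁻¹ • m = 0 := by
  have hp : exp (2 * x) • p + m = exp x • (exp x • p + exp (-x) • m) := by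
    rw [smul_add, smul_smul, smul_smul, ← exp_add, ← exp_add, two_mul, add_neg_cancel, exp_zero,
      one_smul]
  rw [one_add_exp_neg_inv, mul_comm, mul_smul, ← smul_add, hp, h, smul_zero, smul_zero]

theorem bruggeman_converse [FiniteDimensional ℂ V]
    (η : SL2Z →* (V →ₗ[ℂ] V)ˣ) (hηfin : (Set.range η).Finite)
    (ν : ℂ)
    (ψ : ℂ → V) (hψholo : DifferentiableOn ℂ ψ Complex.slitPlane)
    (hψlewis : ∀ z ∈ Complex.slitPlane,
      (η Tmat : V →ₗ[ℂ] V) (ψ z) =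
        ψ (z + 1) + ((z + 1) ^ (-2 * ν - 1)) •
          (η (Smat * Tmat⁻¹) : V →ₗ[ℂ] V) (ψ (z / (z + 1))))
    (f : ℂ → V)
    (hfup : ∀ z : ℂ, 0 < z.im →
      f z = (1 + Complex.exp (-(2 * Real.pi * I * ν)))⁻¹ • lewisCombo ν η ψ z)
    (hfdown : ∀ z : ℂ, z.im < 0 →
      f z = (1 + Complex.exp (2 * Real.pi * I * ν))⁻¹ • lewisCombo ν η ψ z) :
    DifferentiableOn ℂ f {z : ℂ | z.im ≠ 0} ∧
    (∀ z : ℂ, z.im ≠ 0 → f (z + 1) = (η Tmat : V →ₗ[ℂ] V) (f z)) ∧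
    ((∃ Lp Lm : V,
        Tendsto (lewisCombo ν η ψ) (comap Complex.im atTop) (𝓝 Lp) ∧
        Tendsto (lewisCombo ν η ψ) (comap Complex.im atBot) (𝓝 Lm) ∧
        Complex.exp (Real.pi * I * ν) • Lp + Complex.exp (-(Real.pi * I * ν)) • Lm = 0) →
      MemFeta η f) := by
  have hdiff : DifferentiableOn ℂ f {z : ℂ | z.im ≠ 0} :=
    differentiableOn_of_eq_smul_of_eq_smul (differentiableOn_lewisCombo hψholo) hfup hfdown
  have hper : ∀ z : ℂ, z.im ≠ 0 → f (z + 1) = (η Tmat : V →ₗ[ℂ] V) (f z) :=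
    fun _ => apply_add_one_of_eq_smul_of_eq_smul (fun _ => lewisCombo_add_one hψlewis)
      hfup hfdown
  refine ⟨hdiff, hper, fun ⟨Lp, Lm, hLp, hLm, hrel⟩ => ?_⟩
  have htop := tendsto_comap_im_atTop_of_eq_smul hLp hfup
  have hbot := tendsto_comap_im_atBot_of_eq_smul hLm hfdown
  obtain ⟨C, hC, hηC⟩ := exists_norm_apply_le_of_finite (hηfin.image Units.val)
  have hηT (n : ℤ) (v : V) : ‖((η Tmat ^ n : (V →ₗ[ℂ] V)ˣ) : V →ₗ[ℂ] V) v‖ ≤ C * ‖v‖ := by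
    rw [← map_zpow]
    exact hηC _ (mem_image_of_mem _ (mem_range_self _)) v
  have hsum := inv_one_add_exp_smul_add_eq_zero hrel
  simp only [← mul_assoc] at hsum
  exact ⟨hdiff, hper, exists_norm_le_of_apply_add_one hC hηT hdiff.continuousOn hper
      htop.norm.isBoundedUnder_le hbot.norm.isBoundedUnder_le,
    _, _, htop.comp tendsto_ofReal_mul_I_comap_im_atTop,
    hbot.comp tendsto_neg_ofReal_mul_I_comap_im_atBot, hsum⟩

end
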